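/- Let g ≥ 2 be an integer. If A ⊆ [n] is a set such that every nonzero integer d has at most g - 1 representations d = a - a' with a, a' ∈ A, then A is a C_2[g]-set in ℤ, and consequently |A| ≤ (g-1)^{1/2} n^{1/2} + O(n^{1/4}), where the implicit constant depends only on g. -/

import Mathlib

/-!
If `{x, y} + k ⊆ A` for `g` distinct `k`, then `x - y` has `g` representations; so bounded
representation counts give the `C₂[g]` property.

For the size bound (Erdős–Turán), let `W_i = [i, i + u)` for the `n + u` values of `i` with
`W_i ∩ [1, n] ≠ ∅`. Then `∑ |A ∩ W_i| = u |A|`, while `∑ |A ∩ W_i|²` counts pairs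
`(a, b) ∈ A²` with weight `(u - |a - b|)₊`, which is at most `u |A| + (g - 1) u²` because
each nonzero difference occurs at most `g - 1` times. Cauchy–Schwarz gives
`u |A|² ≤ (n + u) (|A| + (g - 1) u)`, and `u ≈ n^{3/4}` yields
`|A| ≤ √((g - 1) n) + O(n^{1/4})`.
-/

/-- `A ⊆ Γ` is a `C_h[g]`-set. -/
def IsChSet {Γ : Type*} [AddCommGroup Γ] (h g : ℕ) (A : Set Γ) : Prop :=
  ∀ X : Finset Γ, X.card = h → ∀ K : Finset Γ, K.card = g →
    ∃ k ∈ K, ¬ (∀ x ∈ X, x + k ∈ A)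

open Finset

section Representations

variable {G : Type*} [AddCommGroup G] [DecidableEq G] {A : Finset G} {m : ℕ}

theorem isChSet_two_of_card_filter_sub_eq_le
    (hA : ∀ d : G, d ≠ 0 → #{p ∈ A ×ˢ A | p.1 - p.2 = d} ≤ m) :
    IsChSet 2 (m + 1) (A : Set G) := by
  intro X hX K hK
  by_contra! hK_sub
  obtain ⟨x, y, hxy, rfl⟩ := card_eq_two.mp hX
  have hK_le : #K ≤ #{p ∈ A ×ˢ A | p.1 - p.2 = x - y} := by
    refine card_le_card_of_injOn (fun k => (x + k, y + k)) (fun k hk => ?_) ?_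
    · have hx := hK_sub k hk x (by simp)
      have hy := hK_sub k hk y (by simp)
      simp_all
    · intro k _ k' _ h
      simpa using congrArg Prod.fst h
  have := hA (x - y) (sub_ne_zero.mpr hxy)
  omega

theorem sum_product_sub_le_card_mul_add
    (hA : ∀ d : G, d ≠ 0 → #{p ∈ A ×ˢ A | p.1 - p.2 = d} ≤ m)
    (f : G → ℕ) {s : Finset G} (hf : ∀ d ∉ s, f d = 0) :
    ∑ p ∈ A ×ˢ A, f (p.1 - p.2) ≤ #A * f 0 + m * ∑ d ∈ s, f d := by
  have h_diag : #{p ∈ A ×ˢ A | p.1 - p.2 = 0} = #A := by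
    simp only [sub_eq_zero]
    rw [← diag_eq_filter, diag_card]
  have h0 : (0 : G) ∉ s.erase 0 := notMem_erase 0 s
  calc ∑ p ∈ A ×ˢ A, f (p.1 - p.2)
      = ∑ d ∈ insert 0 (s.erase 0), ∑ p ∈ A ×ˢ A with p.1 - p.2 = d, f (p.1 - p.2) := by
        rw [sum_fiberwise_eq_sum_filter, sum_filter_of_ne]
        intro p _ hp
        by_contra h
        simp only [mem_insert, mem_erase] at h
        exact hp (hf _ (by tauto))
    _ = #A * f 0 + ∑ d ∈ s.erase 0, #{p ∈ A ×ˢ A | p.1 - p.2 = d} * f d := by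
        simp_rw [sum_insert h0, sum_congr rfl fun p hp => congrArg f (mem_filter.mp hp).2,
          sum_const, smul_eq_mul, h_diag]
    _ ≤ #A * f 0 + ∑ d ∈ s.erase 0, m * f d := by
        gcongr with d hd
        exact hA d (ne_of_mem_erase hd)
    _ ≤ #A * f 0 + m * ∑ d ∈ s, f d := by
        rw [← mul_sum]
        gcongr
        exact erase_subset 0 s

end Representations

theorem sum_Ioo_toNat_sub_abs (u : ℕ) :
    ∑ d ∈ Ioo (-(u : ℤ)) u, ((u : ℤ) - |d|).toNat = u ^ 2 := by
  induction u with
  | zero => simp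
  | succ u ih =>
    have h_Ioo : Ioo (-((u + 1 : ℕ) : ℤ)) ((u + 1 : ℕ) : ℤ) = Icc (-(u : ℤ)) u := by
      ext d; simp only [mem_Ioo, mem_Icc]; omega
    have h_ends : ∑ d ∈ Icc (-(u : ℤ)) u, ((u : ℤ) - |d|).toNat
        = ∑ d ∈ Ioo (-(u : ℤ)) u, ((u : ℤ) - |d|).toNat := by
      refine (sum_subset Ioo_subset_Icc_self fun d hd hd' => ?_).symm
      simp only [mem_Ioo, mem_Icc] at hd hd'
      rw [abs_eq_max_neg]; omega
    have h_succ : ∀ d ∈ Icc (-(u : ℤ)) u,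
        (((u + 1 : ℕ) : ℤ) - |d|).toNat = ((u : ℤ) - |d|).toNat + 1 := by
      intro d hd; simp only [mem_Icc] at hd; rw [abs_eq_max_neg]; omega
    have h_card : #(Icc (-(u : ℤ)) u) = 2 * u + 1 := by
      rw [Int.card_Icc]; omega
    rw [h_Ioo, sum_congr rfl h_succ, sum_add_distrib, h_ends, ih, ← card_eq_sum_ones, h_card]
    ring

section Windows

variable {A : Finset ℤ} {n : ℕ} (u : ℕ)

theorem card_filter_mem_Ico_and_mem_Ico {a b : ℤ} (ha : a ∈ Icc 1 (n : ℤ))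
    (hb : b ∈ Icc 1 (n : ℤ)) :
    #{i ∈ Icc (1 - (u : ℤ)) (n : ℤ) |
        a ∈ Ico i (i + (u : ℤ)) ∧ b ∈ Ico i (i + (u : ℤ))} = ((u : ℤ) - |a - b|).toNat := by
  rw [mem_Icc] at ha hb
  have : {i ∈ Icc (1 - (u : ℤ)) (n : ℤ) |
        a ∈ Ico i (i + (u : ℤ)) ∧ b ∈ Ico i (i + (u : ℤ))} = Icc (max a b - u + 1) (min a b) := by
    ext i
    simp only [mem_filter, mem_Icc, mem_Ico]
    omega
  rw [this, Int.card_Icc, abs_eq_max_neg]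
  omega

theorem sum_card_inter_Ico (hA : A ⊆ Icc 1 (n : ℤ)) :
    ∑ i ∈ Icc (1 - (u : ℤ)) (n : ℤ), #(A ∩ Ico i (i + u)) = u * #A := by
  have h := sum_card_bipartiteAbove_eq_sum_card_bipartiteBelow
    (fun (i a : ℤ) => a ∈ Ico i (i + u)) (s := Icc (1 - (u : ℤ)) (n : ℤ)) (t := A)
  simp only [bipartiteAbove, bipartiteBelow, filter_mem_eq_inter] at h
  rw [h, sum_const_nat (m := u), mul_comm]
  intro a ha
  simpa using card_filter_mem_Ico_and_mem_Ico u (hA ha) (hA ha)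

theorem sum_card_inter_Ico_sq (hA : A ⊆ Icc 1 (n : ℤ)) :
    ∑ i ∈ Icc (1 - (u : ℤ)) (n : ℤ), #(A ∩ Ico i (i + u)) ^ 2
      = ∑ p ∈ A ×ˢ A, ((u : ℤ) - |p.1 - p.2|).toNat := by
  have h := sum_card_bipartiteAbove_eq_sum_card_bipartiteBelow
    (fun (i : ℤ) (p : ℤ × ℤ) => p.1 ∈ Ico i (i + u) ∧ p.2 ∈ Ico i (i + u))
    (s := Icc (1 - (u : ℤ)) (n : ℤ)) (t := A ×ˢ A)
  simp only [bipartiteAbove, bipartiteBelow, filter_product] at h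
  simp_rw [sq, ← card_product, ← filter_mem_eq_inter]
  refine h.trans (sum_congr rfl fun p hp => ?_)
  rw [mem_product] at hp
  exact card_filter_mem_Ico_and_mem_Ico u (hA hp.1) (hA hp.2)

theorem mul_card_sq_le (hA : A ⊆ Icc 1 (n : ℤ)) {m : ℕ}
    (hd : ∀ d : ℤ, d ≠ 0 → #{p ∈ A ×ˢ A | p.1 - p.2 = d} ≤ m) :
    u * #A ^ 2 ≤ (n + u) * (#A + m * u) := by
  have h_toNat : ∀ d ∉ Ioo (-(u : ℤ)) u, ((u : ℤ) - |d|).toNat = 0 := by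
    intro d hd
    rw [mem_Ioo, abs_eq_max_neg] at *
    omega
  have h_sq : (u * #A) ^ 2 ≤ (n + u) * (#A * u + m * u ^ 2) :=
    calc (u * #A) ^ 2 = (∑ i ∈ Icc (1 - (u : ℤ)) (n : ℤ), #(A ∩ Ico i (i + u))) ^ 2 := by
          rw [sum_card_inter_Ico u hA]
      _ ≤ #(Icc (1 - (u : ℤ)) (n : ℤ))
            * ∑ i ∈ Icc (1 - (u : ℤ)) (n : ℤ), #(A ∩ Ico i (i + u)) ^ 2 :=
          sq_sum_le_card_mul_sum_sq
      _ = (n + u) * ∑ p ∈ A ×ˢ A, ((u : ℤ) - |p.1 - p.2|).toNat := by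
          rw [sum_card_inter_Ico_sq u hA, Int.card_Icc]
          congr 1
          omega
      _ ≤ (n + u) * (#A * u + m * u ^ 2) := by
          gcongr
          simpa [sum_Ioo_toNat_sub_abs] using sum_product_sub_le_card_mul_add hd _ h_toNat
  rcases u.eq_zero_or_pos with rfl | hu
  · simp
  refine Nat.le_of_mul_le_mul_left ?_ hu
  convert h_sq using 1 <;> ring

end Windows

theorem le_add_sqrt_of_sq_le_mul_add {S b M : ℝ} (hb : 0 ≤ b) (hM : 0 ≤ M)
    (h : S ^ 2 ≤ b * S + M) : S ≤ b + √M := by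
  by_contra! hlt
  have h_sqrt := Real.sq_sqrt hM
  have hS : 0 < S := (add_nonneg hb (Real.sqrt_nonneg M)).trans_lt hlt
  nlinarith [Real.sqrt_nonneg M, mul_lt_mul_of_pos_left hlt hS]

theorem le_of_forall_mul_sq_le {S c x : ℝ} (hS : 0 ≤ S) (hc : 0 ≤ c) (hx : 1 ≤ x)
    (h : ∀ u : ℕ, u * S ^ 2 ≤ (x ^ 4 + u) * (S + c * u)) :
    S ≤ √c * x ^ 2 + (√c + 2) * x := by
  obtain ⟨u, hu_ge, hu_le⟩ : ∃ u : ℕ, x ^ 3 ≤ u ∧ (u : ℝ) ≤ x ^ 3 + 1 :=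
    ⟨⌈x ^ 3⌉₊, Nat.le_ceil _, (Nat.ceil_lt_add_one (by positivity)).le⟩
  have hu_pos : 0 < (u : ℝ) := lt_of_lt_of_le (by positivity) hu_ge
  have h_ratio : x ^ 4 + u ≤ (x + 1) * u := by nlinarith
  have h_sqrt : x ^ 4 + u ≤ (x ^ 2 + x) ^ 2 := by nlinarith
  have h_quad : S ^ 2 ≤ (x + 1) * S + c * (x ^ 2 + x) ^ 2 := by
    refine le_of_mul_le_mul_left ?_ hu_pos
    calc u * S ^ 2 ≤ (x ^ 4 + u) * (S + c * u) := h u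
      _ = (x ^ 4 + u) * S + c * u * (x ^ 4 + u) := by ring
      _ ≤ (x + 1) * u * S + c * u * (x ^ 2 + x) ^ 2 := by gcongr
      _ = u * ((x + 1) * S + c * (x ^ 2 + x) ^ 2) := by ring
  calc S ≤ (x + 1) + √(c * (x ^ 2 + x) ^ 2) :=
        le_add_sqrt_of_sq_le_mul_add (by positivity) (by positivity) h_quad
    _ = √c * x ^ 2 + (√c + 1) * x + 1 := by
        rw [Real.sqrt_mul hc, Real.sqrt_sq (by positivity)]
        ring
    _ ≤ √c * x ^ 2 + (√c + 2) * x := by linarith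

theorem card_le_sqrt_mul_sqrt_add {A : Finset ℤ} {n m : ℕ} (hA : A ⊆ Icc 1 (n : ℤ))
    (hd : ∀ d : ℤ, d ≠ 0 → #{p ∈ A ×ˢ A | p.1 - p.2 = d} ≤ m) :
    (#A : ℝ) ≤ √m * √n + (√m + 2) * (n : ℝ) ^ ((1 : ℝ) / 4) := by
  rcases A.eq_empty_or_nonempty with rfl | ⟨a, ha⟩
  · simp only [card_empty, Nat.cast_zero]
    positivity
  have hn : (1 : ℝ) ≤ n := by
    have := mem_Icc.mp (hA ha)
    exact_mod_cast this.1.trans this.2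
  set x := (n : ℝ) ^ ((1 : ℝ) / 4) with hx
  have hx4 : x ^ 4 = n := by
    rw [hx, ← Real.rpow_natCast, ← Real.rpow_mul (by positivity)]
    norm_num
  have hx2 : √n = x ^ 2 := by
    rw [Real.sqrt_eq_rpow, hx, ← Real.rpow_natCast, ← Real.rpow_mul (by positivity)]
    norm_num
  have hx1 : 1 ≤ x := Real.one_le_rpow hn (by norm_num)
  rw [hx2]
  refine le_of_forall_mul_sq_le (Nat.cast_nonneg _) m.cast_nonneg hx1 fun u => ?_
  rw [hx4]
  exact_mod_cast mul_card_sq_le u hA hd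

theorem stmt19 (g : ℕ) (hg : 2 ≤ g) :
    ∃ C : ℝ, 0 < C ∧ ∀ n : ℕ, ∀ A : Finset ℤ, (A : Set ℤ) ⊆ Set.Icc 1 (n : ℤ) →
      (∀ d : ℤ, d ≠ 0 → ((A ×ˢ A).filter fun p => p.1 - p.2 = d).card ≤ g - 1) →
      IsChSet 2 g (A : Set ℤ) ∧
      (A.card : ℝ) ≤ ((g : ℝ) - 1) ^ ((1 : ℝ) / 2) * (n : ℝ) ^ ((1 : ℝ) / 2)
        + C * (n : ℝ) ^ ((1 : ℝ) / 4) := by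
  refine ⟨√((g : ℝ) - 1) + 2, by positivity, fun n A hA hd => ⟨?_, ?_⟩⟩
  · obtain ⟨m, rfl⟩ : ∃ m, g = m + 1 := ⟨g - 1, by omega⟩
    exact isChSet_two_of_card_filter_sub_eq_le hd
  rw [← coe_Icc, coe_subset] at hA
  have hg1 : ((g - 1 : ℕ) : ℝ) = g - 1 := by
    rw [Nat.cast_sub (by omega), Nat.cast_one]
  simpa only [← Real.sqrt_eq_rpow, hg1] using card_le_sqrt_mul_sqrt_add hA hd
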